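/- arXiv:2112.12174 — 2 statements merged into one kernel-verified Lean document; each statement's English description precedes it below -/
import Mathlib

section
/- If Λ = k(Γ,A,I) is a generalized bound path algebra, then its opposite algebra Λ^op is isomorphic to k(Γ^op, A^op, I^op), where Γ^op is the opposite quiver, A^op = (A_i^op)_{i∈Γ₀}, and I^op is the set of relations obtained from I by reversing arrows. -/
/-
Reversing generalized paths is an anti-isomorphism from the free algebra on the arrows of `Γ` and
the elements of the `Aᵢ` onto the corresponding free algebra for `Γᵒᵖ` and the `Aᵢᵐᵒᵖ`. It carries
every defining relation of `k(Γ,A,I)` to one of `k(Γᵒᵖ,Aᵒᵖ,Iᵒᵖ)` (left and right relations for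
arrows trade places, products in `Aᵢ` are reversed) and its inverse does the same in the other
direction, so it descends to an anti-isomorphism of the quotients.
-/

open Quiver MulOpposite

inductive Gen (V : Type) [Quiver.{0} V] (A : V → Type) : Type
  | vert : (i : V) → A i → Gen V A
  | arrow : {i j : V} → (i ⟶ j) → Gen V A

variable (k : Type) [Field k]
variable (V : Type) [Fintype V] [DecidableEq V] [Quiver.{0} V]
variable (A : V → Type) [∀ i, Ring (A i)] [∀ i, Algebra k (A i)]

/-- The defining relations of the generalized (bound) path algebra `k(Γ,𝒜,I)`:
multilinearity/multiplicativity in each vertex algebra, orthogonality of the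
vertex components, the identity `∑ᵢ 1_{Aᵢ} = 1`, unit relations for arrows,
together with the bound relations coming from the set `R` (the interleaved
relations `𝒜(I)` induced by the admissible set of relations `I`). -/
inductive GPARel (R : Set (FreeAlgebra k (Gen V A))) :
    FreeAlgebra k (Gen V A) → FreeAlgebra k (Gen V A) → Prop
  | add (i : V) (a b : A i) :
      GPARel R (FreeAlgebra.ι k (Gen.vert i (a + b)))
        (FreeAlgebra.ι k (Gen.vert i a) + FreeAlgebra.ι k (Gen.vert i b))
  | smul (i : V) (c : k) (a : A i) :
      GPARel R (FreeAlgebra.ι k (Gen.vert i (c • a))) (c • FreeAlgebra.ι k (Gen.vert i a))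
  | mul (i : V) (a b : A i) :
      GPARel R (FreeAlgebra.ι k (Gen.vert i (a * b)))
        (FreeAlgebra.ι k (Gen.vert i a) * FreeAlgebra.ι k (Gen.vert i b))
  | orth {i j : V} (h : i ≠ j) (a : A i) (b : A j) :
      GPARel R (FreeAlgebra.ι k (Gen.vert i a) * FreeAlgebra.ι k (Gen.vert j b)) 0
  | sum_one :
      GPARel R (∑ i : V, FreeAlgebra.ι k (Gen.vert i (1 : A i))) 1
  | arrow_left {i j : V} (α : i ⟶ j) :
      GPARel R (FreeAlgebra.ι k (Gen.vert i (1 : A i)) * FreeAlgebra.ι k (Gen.arrow α))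
        (FreeAlgebra.ι k (Gen.arrow α))
  | arrow_right {i j : V} (α : i ⟶ j) :
      GPARel R (FreeAlgebra.ι k (Gen.arrow α) * FreeAlgebra.ι k (Gen.vert j (1 : A j)))
        (FreeAlgebra.ι k (Gen.arrow α))
  | arrow_zero_left {i j l : V} (α : i ⟶ j) (h : l ≠ i) (a : A l) :
      GPARel R (FreeAlgebra.ι k (Gen.vert l a) * FreeAlgebra.ι k (Gen.arrow α)) 0
  | arrow_zero_right {i j l : V} (α : i ⟶ j) (h : l ≠ j) (a : A l) :
      GPARel R (FreeAlgebra.ι k (Gen.arrow α) * FreeAlgebra.ι k (Gen.vert l a)) 0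
  | bound (r : FreeAlgebra k (Gen V A)) (h : r ∈ R) : GPARel R r 0

/-- The generalized bound path algebra `k(Γ,𝒜,I)` (for `R = ∅` this is the
generalized path algebra `k(Γ,𝒜)`). -/
abbrev GPA (R : Set (FreeAlgebra k (Gen V A))) : Type := RingQuot (GPARel k V A R)

variable (R : Set (FreeAlgebra k (Gen V A)))

/-- The canonical (non-unital) embedding of the vertex algebra `A i` into `k(Γ,𝒜,I)`. -/
noncomputable def ιV (i : V) (a : A i) : GPA k V A R :=
  RingQuot.mkAlgHom k (GPARel k V A R) (FreeAlgebra.ι k (Gen.vert i a))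

/-- The class of an arrow `α` of `Γ` in `k(Γ,𝒜,I)`. -/
noncomputable def ιA {i j : V} (α : i ⟶ j) : GPA k V A R :=
  RingQuot.mkAlgHom k (GPARel k V A R) (FreeAlgebra.ι k (Gen.arrow α))

/-- The idempotent `1_{Aᵢ}` of `k(Γ,𝒜,I)` attached to the vertex `i`. -/
noncomputable def eV (i : V) : GPA k V A R := ιV k V A R i 1

noncomputable instance : Fintype Vᵒᵖ := Fintype.ofEquiv V Opposite.equivToOpposite
instance : DecidableEq Vᵒᵖ := Opposite.equivToOpposite.symm.injective.decidableEq

/-- The opposite family of algebras `𝒜ᵒᵖ` on the opposite quiver. -/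
abbrev Aop (i : Vᵒᵖ) : Type := (A i.unop)ᵐᵒᵖ

/-- The reversal map on the free path-algebra: it sends a generalized path to the reversed
generalized path over the opposite quiver with opposite vertex algebras. -/
noncomputable def revF : FreeAlgebra k (Gen V A) →ₐ[k] (FreeAlgebra k (Gen Vᵒᵖ (Aop V A)))ᵐᵒᵖ :=
  FreeAlgebra.lift k fun g =>
    match g with
    | Gen.vert i a => op (FreeAlgebra.ι k (Gen.vert (Opposite.op i) (op a)))
    | Gen.arrow α => op (FreeAlgebra.ι k (Gen.arrow α.op))

section OppositeAlgebra

variable {S B C : Type*} [CommSemiring S] [Semiring B] [Algebra S B] [Semiring C] [Algebra S C]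

noncomputable def AlgEquiv.ofOpAlgHom (f : B →ₐ[S] Cᵐᵒᵖ) (g : C →ₐ[S] Bᵐᵒᵖ)
    (hgf : (AlgHom.opComm g).comp f = AlgHom.id S B)
    (hfg : (AlgHom.opComm f).comp g = AlgHom.id S C) : B ≃ₐ[S] Cᵐᵒᵖ :=
  AlgEquiv.ofAlgHom f (AlgHom.opComm g)
    (by ext x; simpa using congrArg MulOpposite.op (AlgHom.congr_fun hfg (MulOpposite.unop x)))
    hgf

variable {r : B → B → Prop} {s : C → C → Prop}

noncomputable def RingQuot.opAlgEquiv (e : B ≃ₐ[S] Cᵐᵒᵖ)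
    (hr : ∀ ⦃x y⦄, r x y → mkAlgHom S s (unop (e x)) = mkAlgHom S s (unop (e y)))
    (hs : ∀ ⦃x y⦄, s x y → mkAlgHom S r (e.symm (op x)) = mkAlgHom S r (e.symm (op y))) :
    RingQuot r ≃ₐ[S] (RingQuot s)ᵐᵒᵖ :=
  AlgEquiv.ofOpAlgHom
    (liftAlgHom S ⟨(AlgHom.op (mkAlgHom S s)).comp e.toAlgHom, fun _ _ h => by simp [hr h]⟩)
    (liftAlgHom S ⟨(AlgHom.op (mkAlgHom S r)).comp (AlgEquiv.opComm e).symm.toAlgHom,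
      fun _ _ h => by simp [hs h]⟩)
    (by ext x; simp)
    (by ext x; simp)

end OppositeAlgebra

noncomputable def revG : FreeAlgebra k (Gen Vᵒᵖ (Aop V A)) →ₐ[k] (FreeAlgebra k (Gen V A))ᵐᵒᵖ :=
  FreeAlgebra.lift k fun g =>
    match g with
    | Gen.vert i a => op (FreeAlgebra.ι k (Gen.vert i.unop a.unop))
    | Gen.arrow α => op (FreeAlgebra.ι k (Gen.arrow α.unop))

omit [Fintype V] [DecidableEq V] [∀ i, Ring (A i)] [∀ i, Algebra k (A i)] in
@[simp]
theorem revF_ι_vert (i : V) (a : A i) :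
    revF k V A (FreeAlgebra.ι k (Gen.vert i a)) =
      op (FreeAlgebra.ι k (Gen.vert (.op i) (op a))) := by
  simp [revF]

omit [Fintype V] [DecidableEq V] [∀ i, Ring (A i)] [∀ i, Algebra k (A i)] in
@[simp]
theorem revF_ι_arrow {i j : V} (α : i ⟶ j) :
    revF k V A (FreeAlgebra.ι k (Gen.arrow α)) = op (FreeAlgebra.ι k (Gen.arrow α.op)) := by
  simp [revF]

omit [Fintype V] [DecidableEq V] [∀ i, Ring (A i)] [∀ i, Algebra k (A i)] in
@[simp]
theorem revG_ι_vert (i : Vᵒᵖ) (a : Aop V A i) :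
    revG k V A (FreeAlgebra.ι k (Gen.vert i a)) =
      op (FreeAlgebra.ι k (Gen.vert i.unop a.unop)) := by
  simp [revG]

omit [Fintype V] [DecidableEq V] [∀ i, Ring (A i)] [∀ i, Algebra k (A i)] in
@[simp]
theorem revG_ι_arrow {i j : Vᵒᵖ} (α : i ⟶ j) :
    revG k V A (FreeAlgebra.ι k (Gen.arrow α)) = op (FreeAlgebra.ι k (Gen.arrow α.unop)) := by
  simp [revG]

noncomputable def revEquiv :
    FreeAlgebra k (Gen V A) ≃ₐ[k] (FreeAlgebra k (Gen Vᵒᵖ (Aop V A)))ᵐᵒᵖ :=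
  AlgEquiv.ofOpAlgHom (revF k V A) (revG k V A)
    (FreeAlgebra.hom_ext <| funext fun g => by cases g <;> simp)
    (FreeAlgebra.hom_ext <| funext fun g => by cases g <;> simp)

omit [DecidableEq V] in
theorem mkAlgHom_unop_revF_eq_of_gpaRel {x y : FreeAlgebra k (Gen V A)} (h : GPARel k V A R x y) :
    RingQuot.mkAlgHom k (GPARel k Vᵒᵖ (Aop V A) ((fun x => unop (revF k V A x)) '' R))
        (unop (revF k V A x)) =
    RingQuot.mkAlgHom k (GPARel k Vᵒᵖ (Aop V A) ((fun x => unop (revF k V A x)) '' R))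
        (unop (revF k V A y)) := by
  let R' := (fun x => unop (revF k V A x)) '' R
  induction h with
  | add i a b =>
    simpa using
      RingQuot.mkAlgHom_rel k (GPARel.add (R := R') (.op i) (op a) (op b))
  | smul i c a =>
    simpa using
      RingQuot.mkAlgHom_rel k (GPARel.smul (R := R') (.op i) c (op a))
  | mul i a b =>
    simpa using
      RingQuot.mkAlgHom_rel k (GPARel.mul (R := R') (.op i) (op b) (op a))
  | orth h a b =>
    simpa using
      RingQuot.mkAlgHom_rel k (GPARel.orth (R := R') (by simpa using h.symm) (op b) (op a))
  | sum_one =>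
    have h := RingQuot.mkAlgHom_rel k (GPARel.sum_one (R := R'))
    simp only [map_sum, map_one] at h
    simp only [map_sum, revF_ι_vert, op_one, Finset.unop_sum, unop_op, map_one, unop_one]
    rw [← h]
    exact Fintype.sum_equiv Opposite.equivToOpposite _ _ fun _ => rfl
  | arrow_left α =>
    simpa using
      RingQuot.mkAlgHom_rel k (GPARel.arrow_right (R := R') α.op)
  | arrow_right α =>
    simpa using
      RingQuot.mkAlgHom_rel k (GPARel.arrow_left (R := R') α.op)
  | arrow_zero_left α h a =>
    simpa using
      RingQuot.mkAlgHom_rel k (GPARel.arrow_zero_right (R := R') α.op (by simpa using h) (op a))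
  | arrow_zero_right α h a =>
    simpa using
      RingQuot.mkAlgHom_rel k (GPARel.arrow_zero_left (R := R') α.op (by simpa using h) (op a))
  | bound r hr =>
    simpa using
      RingQuot.mkAlgHom_rel k (GPARel.bound (R := R') _ ⟨r, hr, rfl⟩)

omit [Fintype V] [DecidableEq V] [∀ i, Ring (A i)] [∀ i, Algebra k (A i)] in
theorem unop_revG_unop_revF (x : FreeAlgebra k (Gen V A)) :
    unop (revG k V A (unop (revF k V A x))) = x :=
  (revEquiv k V A).symm_apply_apply x

omit [DecidableEq V] in
theorem mkAlgHom_unop_revG_eq_of_gpaRel {x y : FreeAlgebra k (Gen Vᵒᵖ (Aop V A))}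
    (h : GPARel k Vᵒᵖ (Aop V A) ((fun x => unop (revF k V A x)) '' R) x y) :
    RingQuot.mkAlgHom k (GPARel k V A R) (unop (revG k V A x)) =
    RingQuot.mkAlgHom k (GPARel k V A R) (unop (revG k V A y)) := by
  induction h with
  | add i a b =>
    simpa using
      RingQuot.mkAlgHom_rel k (GPARel.add (R := R) i.unop a.unop b.unop)
  | smul i c a =>
    simpa using
      RingQuot.mkAlgHom_rel k (GPARel.smul (R := R) i.unop c a.unop)
  | mul i a b =>
    simpa using
      RingQuot.mkAlgHom_rel k (GPARel.mul (R := R) i.unop b.unop a.unop)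
  | orth h a b =>
    simpa using
      RingQuot.mkAlgHom_rel k (GPARel.orth (R := R) (by simpa using h.symm) b.unop a.unop)
  | sum_one =>
    have h := RingQuot.mkAlgHom_rel k (GPARel.sum_one (R := R))
    simp only [map_sum, map_one] at h
    simp only [map_sum, revG_ι_vert, unop_one, Finset.unop_sum, unop_op, map_one]
    rw [← h]
    exact Fintype.sum_equiv Opposite.equivToOpposite.symm _ _ fun _ => rfl
  | arrow_left α =>
    simpa using
      RingQuot.mkAlgHom_rel k (GPARel.arrow_right (R := R) α.unop)
  | arrow_right α =>
    simpa using
      RingQuot.mkAlgHom_rel k (GPARel.arrow_left (R := R) α.unop)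
  | arrow_zero_left α h a =>
    simpa using
      RingQuot.mkAlgHom_rel k (GPARel.arrow_zero_right (R := R) α.unop (by simpa using h) a.unop)
  | arrow_zero_right α h a =>
    simpa using
      RingQuot.mkAlgHom_rel k (GPARel.arrow_zero_left (R := R) α.unop (by simpa using h) a.unop)
  | bound r hr =>
    obtain ⟨r, hr, rfl⟩ := hr
    simpa [unop_revG_unop_revF] using RingQuot.mkAlgHom_rel k (GPARel.bound (R := R) r hr)

/-- If `Λ = k(Γ,𝒜,I)` is a generalized bound path algebra, then
`Λᵒᵖ ≅ k(Γᵒᵖ,𝒜ᵒᵖ,Iᵒᵖ)`, where `Iᵒᵖ` is obtained from `I` by reversing arrows. -/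
theorem gbp_op_iso (R : Set (FreeAlgebra k (Gen V A))) :
    Nonempty ((GPA k V A R)ᵐᵒᵖ ≃ₐ[k]
      GPA k Vᵒᵖ (Aop V A) ((fun x => unop (revF k V A x)) '' R)) :=
  ⟨AlgEquiv.opComm (RingQuot.opAlgEquiv (revEquiv k V A)
    (fun _ _ h => mkAlgHom_unop_revF_eq_of_gpaRel k V A R h)
    -- `(revEquiv k V A).symm (op x)` is `unop (revG k V A x)` definitionally
    (fun _ _ h => mkAlgHom_unop_revG_eq_of_gpaRel k V A R h))⟩
end

section
/- Let E_i = {e_{i1},…,e_{is_i}} be a complete set of primitive pairwise orthogonal idempotents of A_i, and let P_i^j = e_{ij}A_i be the corresponding indecomposable projective A_i-module. Then for every i ∈ Γ₀ and 1 ≤ j ≤ s_i, the indecomposable projective Λ-module P(i,j) = ē_{ij}Λ equals the cone C_i(P_i^j). -/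
open Quiver MulOpposite

variable (k : Type) [Field k]
variable (V : Type) [Fintype V] [DecidableEq V] [Quiver.{0} V]
variable (A : V → Type) [∀ i, Ring (A i)] [∀ i, Algebra k (A i)]

variable (R : Set (FreeAlgebra k (Gen V A)))

section Cone

variable (i : V) (M : Type) [AddCommGroup M] [Module k M] [Module (A i)ᵐᵒᵖ M]
variable (C : Type) [AddCommGroup C] [Module k C] [Module (GPA k V A R)ᵐᵒᵖ C]
  [IsScalarTower k (GPA k V A R)ᵐᵒᵖ C]

/-- `C`, together with the `k`-linear structure map `η : M → C`, is *the cone*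
`𝒞ᵢ(M) = M ⊗_{A_𝒜} Λ` over the right `A i`-module `M`: this is the universal
property of the extension of scalars along `A_𝒜 = ∏ᵢ Aᵢ → Λ`, where the
`A_𝒜`-module structure on `M` is via the projection onto the `i`-th factor. -/
structure IsCone (η : M →ₗ[k] C) : Prop where
  compat : ∀ (a : A i) (m : M), η (op a • m) = op (ιV k V A R i a) • η m
  supp : ∀ (l : V), l ≠ i → ∀ (b : A l) (m : M), op (ιV k V A R l b) • η m = 0
  univ : ∀ (X : Type) [AddCommGroup X] [Module k X] [Module (GPA k V A R)ᵐᵒᵖ X]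
      [IsScalarTower k (GPA k V A R)ᵐᵒᵖ X] (g : M →ₗ[k] X),
      (∀ (a : A i) (m : M), g (op a • m) = op (ιV k V A R i a) • g m) →
      (∀ (l : V), l ≠ i → ∀ (b : A l) (m : M), op (ιV k V A R l b) • g m = 0) →
      ∃! h : C →ₗ[(GPA k V A R)ᵐᵒᵖ] X, ∀ m, h (η m) = g m

/-- `C`, together with the `k`-linear costructure map `ε : C → M`, is *the dual
cone* `𝒞ᵢ*(M) = D(𝒞ᵢ(DM))` over the right `A i`-module `M`: this is the universal
property of the coextension of scalars along `A_𝒜 = ∏ᵢ Aᵢ → Λ`. -/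
structure IsDualCone (ε : C →ₗ[k] M) : Prop where
  compat : ∀ (a : A i) (c : C), ε (op (ιV k V A R i a) • c) = op a • ε c
  supp : ∀ (l : V), l ≠ i → ∀ (b : A l) (c : C), ε (op (ιV k V A R l b) • c) = 0
  univ : ∀ (X : Type) [AddCommGroup X] [Module k X] [Module (GPA k V A R)ᵐᵒᵖ X]
      [IsScalarTower k (GPA k V A R)ᵐᵒᵖ X] (g : X →ₗ[k] M),
      (∀ (a : A i) (x : X), g (op (ιV k V A R i a) • x) = op a • g x) →
      (∀ (l : V), l ≠ i → ∀ (b : A l) (x : X), g (op (ιV k V A R l b) • x) = 0) →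
      ∃! h : X →ₗ[(GPA k V A R)ᵐᵒᵖ] C, ∀ x, ε (h x) = g x

end Cone

/-- An idempotent is *primitive* if it is nonzero and cannot be written as a sum of two
nonzero orthogonal idempotents. -/
def IsPrimitiveIdem {B : Type} [Ring B] (x : B) : Prop :=
  IsIdempotentElem x ∧ x ≠ 0 ∧
    ∀ a b : B, IsIdempotentElem a → IsIdempotentElem b → a * b = 0 → b * a = 0 →
      a + b = x → a = 0 ∨ b = 0

/-!
The right ideal `ēΛ` is generated by `ē`, so a `Λ`-linear map out of it is determined by the
image of `ē`. Given `g : eAᵢ → X` compatible with the `Aᵢ`-action, the extension is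
`c ↦ g(e)·c`; it restricts to `g` because `m = e·m` for `m ∈ eAᵢ`,
whence `g(m) = g(e)·ιV(m)`.
-/

section IdempotentRightIdeal

open Submodule

variable {B B' : Type} [Ring B] [Ring B']

theorem mem_span_op_singleton {e x : B} : x ∈ span Bᵐᵒᵖ {e} ↔ ∃ b, e * b = x := by
  simp [mem_span_singleton, op_surjective.exists]

theorem IsIdempotentElem.mul_eq_of_mem_span_op_singleton {e x : B} (he : IsIdempotentElem e)
    (hx : x ∈ span Bᵐᵒᵖ {e}) : e * x = x := by
  obtain ⟨b, rfl⟩ := mem_span_op_singleton.mp hx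
  rw [← mul_assoc, he.eq]

theorem map_mem_span_op_singleton {F : Type} [FunLike F B B'] [MulHomClass F B B'] (f : F)
    {e x : B} (hx : x ∈ span Bᵐᵒᵖ {e}) : f x ∈ span B'ᵐᵒᵖ {f e} := by
  obtain ⟨b, rfl⟩ := mem_span_op_singleton.mp hx
  exact mem_span_op_singleton.mpr ⟨f b, (map_mul f e b).symm⟩

theorem linearMap_ext_span_singleton {R M X : Type} [Semiring R] [AddCommMonoid M] [Module R M]
    [AddCommMonoid X] [Module R X] {x : M} {f g : span R {x} →ₗ[R] X}
    (h : f ⟨x, mem_span_singleton_self x⟩ = g ⟨x, mem_span_singleton_self x⟩) : f = g := by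
  refine LinearMap.ext_on span_span_coe_preimage ?_
  rintro ⟨y, hy⟩ (rfl : y = x)
  exact h

def spanOpSingletonLift (e : B) {X : Type} [AddCommGroup X] [Module Bᵐᵒᵖ X] (x : X) :
    span Bᵐᵒᵖ {e} →ₗ[Bᵐᵒᵖ] X where
  toFun c := op (c : B) • x
  map_add' c d := by simp [add_smul]
  map_smul' r c := by simp [mul_smul]

variable {k} [Algebra k B] [Algebra k B']

def spanOpSingletonMap (f : B →ₙₐ[k] B') (e : B) :
    span Bᵐᵒᵖ {e} →ₗ[k] span B'ᵐᵒᵖ {f e} where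
  toFun x := ⟨f (x : B), map_mem_span_op_singleton f x.2⟩
  map_add' x y := Subtype.ext (map_add f (x : B) y)
  map_smul' c x := Subtype.ext (map_smul f c (x : B))

end IdempotentRightIdeal

section VertexEmbedding

omit [DecidableEq V]

open Submodule

lemma ιV_add (i : V) (a b : A i) :
    ιV k V A R i (a + b) = ιV k V A R i a + ιV k V A R i b := by
  simpa [ιV] using RingQuot.mkAlgHom_rel k (GPARel.add (R := R) i a b)

lemma ιV_smul (i : V) (c : k) (a : A i) :
    ιV k V A R i (c • a) = c • ιV k V A R i a := by
  simpa [ιV] using RingQuot.mkAlgHom_rel k (GPARel.smul (R := R) i c a)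

lemma ιV_mul (i : V) (a b : A i) :
    ιV k V A R i (a * b) = ιV k V A R i a * ιV k V A R i b := by
  simpa [ιV] using RingQuot.mkAlgHom_rel k (GPARel.mul (R := R) i a b)

lemma ιV_mul_ιV_of_ne {i l : V} (h : i ≠ l) (a : A i) (b : A l) :
    ιV k V A R i a * ιV k V A R l b = 0 := by
  simpa [ιV] using RingQuot.mkAlgHom_rel k (GPARel.orth (R := R) h a b)

noncomputable def ιVHom (i : V) : A i →ₙₐ[k] GPA k V A R where
  toFun := ιV k V A R i
  map_smul' := ιV_smul k V A R i
  map_zero' := by simpa using ιV_smul k V A R i 0 0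
  map_add' := ιV_add k V A R i
  map_mul' := ιV_mul k V A R i

theorem isCone_span_op_singleton {i : V} {e : A i} (he : IsIdempotentElem e) :
    IsCone k V A R i (span (A i)ᵐᵒᵖ {e}) (span (GPA k V A R)ᵐᵒᵖ {ιVHom k V A R i e})
      (spanOpSingletonMap (ιVHom k V A R i) e) where
  compat a m := Subtype.ext (ιV_mul k V A R i m a)
  supp l hl b m := Subtype.ext (ιV_mul_ιV_of_ne k V A R (Ne.symm hl) m b)
  univ X _ _ _ _ g hcompat _ := by
    let m₀ : span (A i)ᵐᵒᵖ {e} := ⟨e, mem_span_singleton_self e⟩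
    let η := spanOpSingletonMap (ιVHom k V A R i) e
    have hlift : ∀ m, spanOpSingletonLift _ (g m₀) (η m) = g m := by
      intro m
      have hm : op (m : A i) • m₀ = m := Subtype.ext (he.mul_eq_of_mem_span_op_singleton m.2)
      calc op (ιV k V A R i m) • g m₀ = g (op (m : A i) • m₀) := (hcompat _ _).symm
        _ = g m := by rw [hm]
    exact ⟨_, hlift, fun h hh =>
      linearMap_ext_span_singleton ((hh m₀).trans (hlift m₀).symm)⟩

end VertexEmbedding

theorem projective_is_cone (i : V) (s : ℕ) (E : Fin s → A i)
    (hprim : ∀ j, IsPrimitiveIdem (E j)) (j : Fin s) :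
    ∃ η : ↥(Submodule.span ((A i)ᵐᵒᵖ) ({E j} : Set (A i))) →ₗ[k]
        ↥(Submodule.span ((GPA k V A R)ᵐᵒᵖ) ({ιV k V A R i (E j)} : Set (GPA k V A R))),
      (∀ x : ↥(Submodule.span ((A i)ᵐᵒᵖ) ({E j} : Set (A i))),
        (η x : GPA k V A R) = ιV k V A R i (x : A i)) ∧
      IsCone k V A R i ↥(Submodule.span ((A i)ᵐᵒᵖ) ({E j} : Set (A i)))
        ↥(Submodule.span ((GPA k V A R)ᵐᵒᵖ) ({ιV k V A R i (E j)} : Set (GPA k V A R))) η :=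
  ⟨spanOpSingletonMap (ιVHom k V A R i) (E j), fun _ => rfl,
    isCone_span_op_singleton k V A R (hprim j).1⟩
end
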